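/- (Crelle's circumquadrance formula) Let A0, A1, A2, A3 be points of F³ whose difference vectors A1−A0, A2−A0, A3−A0 are linearly independent, let C be a point with Q(C,A_0) = Q(C,A_1) = Q(C,A_2) = Q(C,A_3) (a B-circumcentre of the tetrahedron A0A1A2A3), and let R = Q(C,A_0) be the B-circumquadrance. Then 4·𝒱·R = A(Q01·Q23, Q02·Q13, Q03·Q12). -/
import Mathlib


open Matrix

/-- The `B`-scalar product of two vectors in `F³`: `u ·_B v = u B vᵀ`. -/
def bdot {F : Type*} [Field F] (B : Matrix (Fin 3) (Fin 3) F) (u v : Fin 3 → F) : F :=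
  u ⬝ᵥ B.mulVec v

/-- The `B`-quadrance of two points: `Q(X,Y) = (Y−X)·_B(Y−X)`. -/
def quadrance {F : Type*} [Field F] (B : Matrix (Fin 3) (Fin 3) F) (X Y : Fin 3 → F) : F :=
  bdot B (Y - X) (Y - X)

/-- Archimedes's function `A(a,b,c) = (a+b+c)² − 2(a²+b²+c²)`. -/
def archi {F : Type*} [Field F] (a b c : F) : F :=
  (a + b + c) ^ 2 - 2 * (a ^ 2 + b ^ 2 + c ^ 2)

/-- The `B`-quadrume of the tetrahedron `A0A1A2A3`. -/
def quadrume {F : Type*} [Field F] (B : Matrix (Fin 3) (Fin 3) F)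
    (A0 A1 A2 A3 : Fin 3 → F) : F :=
  (1 / 2) * Matrix.det
    !![2 * quadrance B A0 A1,
       quadrance B A0 A1 + quadrance B A0 A2 - quadrance B A1 A2,
       quadrance B A0 A1 + quadrance B A0 A3 - quadrance B A1 A3;
       quadrance B A0 A1 + quadrance B A0 A2 - quadrance B A1 A2,
       2 * quadrance B A0 A2,
       quadrance B A0 A2 + quadrance B A0 A3 - quadrance B A2 A3;
       quadrance B A0 A1 + quadrance B A0 A3 - quadrance B A1 A3,
       quadrance B A0 A2 + quadrance B A0 A3 - quadrance B A2 A3,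
       2 * quadrance B A0 A3]

section AuxBdot
variable {F : Type*} [Field F] (B : Matrix (Fin 3) (Fin 3) F)

lemma bdot_symm (hB : B.IsSymm) (u v : Fin 3 → F) : bdot B u v = bdot B v u := by
  simp only [bdot, dotProduct, Matrix.mulVec, dotProduct, Finset.mul_sum]
  rw [Finset.sum_comm]
  refine Finset.sum_congr rfl fun i _ => Finset.sum_congr rfl fun j _ => ?_
  rw [Matrix.IsSymm.apply hB i j]
  ring

lemma bdot_sub_left (x y z : Fin 3 → F) :
    bdot B (x - y) z = bdot B x z - bdot B y z := by
  simp [bdot, sub_dotProduct]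

lemma bdot_sub_right (x y z : Fin 3 → F) :
    bdot B x (y - z) = bdot B x y - bdot B x z := by
  simp [bdot, Matrix.mulVec_sub, dotProduct_sub]

lemma bdot_add_right (x y z : Fin 3 → F) :
    bdot B x (y + z) = bdot B x y + bdot B x z := by
  simp [bdot, Matrix.mulVec_add, dotProduct_add]

lemma bdot_smul_right (a : F) (x y : Fin 3 → F) :
    bdot B x (a • y) = a * bdot B x y := by
  simp [bdot, Matrix.mulVec_smul, dotProduct_smul, smul_eq_mul]

lemma bdot_neg_neg (x y : Fin 3 → F) : bdot B (-x) (-y) = bdot B x y := by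
  simp [bdot, Matrix.mulVec_neg]

lemma bdot_zero_left (y : Fin 3 → F) : bdot B 0 y = 0 := by
  simp [bdot]

lemma bdot_zero_right (x : Fin 3 → F) : bdot B x 0 = 0 := by
  simp [bdot, Matrix.mulVec_zero]

lemma bdot_sub_sub (hB : B.IsSymm) (x y : Fin 3 → F) :
    bdot B (x - y) (x - y) = bdot B x x - 2 * bdot B x y + bdot B y y := by
  rw [bdot_sub_left, bdot_sub_right, bdot_sub_right, bdot_symm B hB y x]
  ring

end AuxBdot

/-- **Crelle's circumquadrance formula.**
For a tetrahedron `A0A1A2A3` with B-circumcentre `C` and B-circumquadrance `R = Q(C,A0)`,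
`4·𝒱·R = A(Q01·Q23, Q02·Q13, Q03·Q12)`. -/
theorem crelle_circumquadrance {F : Type*} [Field F]
    (h2 : (2 : F) ≠ 0) (h3 : (3 : F) ≠ 0)
    (B : Matrix (Fin 3) (Fin 3) F) (hB : B.IsSymm) (hBdet : IsUnit B.det)
    (A0 A1 A2 A3 : Fin 3 → F)
    (hind : LinearIndependent F ![A1 - A0, A2 - A0, A3 - A0])
    (C : Fin 3 → F)
    (hC01 : quadrance B C A0 = quadrance B C A1)
    (hC02 : quadrance B C A0 = quadrance B C A2)
    (hC03 : quadrance B C A0 = quadrance B C A3)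
    (R : F) (hR : R = quadrance B C A0) :
    4 * quadrume B A0 A1 A2 A3 * R =
      archi (quadrance B A0 A1 * quadrance B A2 A3)
            (quadrance B A0 A2 * quadrance B A1 A3)
            (quadrance B A0 A3 * quadrance B A1 A2) := by
  classical
  have key : ∀ X Y : Fin 3 → F, quadrance B X Y =
      bdot B (Y - A0) (Y - A0) - 2 * bdot B (Y - A0) (X - A0) + bdot B (X - A0) (X - A0) := by
    intro X Y
    rw [quadrance, show Y - X = (Y - A0) - (X - A0) by abel, bdot_sub_sub B hB]
  -- write the circumcentre offset in the basis of difference vectors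
  have hcard : Fintype.card (Fin 3) = Module.finrank F (Fin 3 → F) := by simp
  obtain ⟨t0, t1, t2, hcrepr⟩ : ∃ t0 t1 t2 : F,
      C - A0 = t0 • (A1 - A0) + t1 • (A2 - A0) + t2 • (A3 - A0) := by
    let b := basisOfLinearIndependentOfCardEqFinrank hind hcard
    have hb : ⇑b = ![A1 - A0, A2 - A0, A3 - A0] :=
      coe_basisOfLinearIndependentOfCardEqFinrank hind hcard
    refine ⟨b.repr (C - A0) 0, b.repr (C - A0) 1, b.repr (C - A0) 2, ?_⟩
    have h := b.sum_repr (C - A0)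
    rw [Fin.sum_univ_three] at h
    simp only [hb, Matrix.cons_val_zero, Matrix.cons_val_one, Matrix.head_cons,
      Matrix.cons_val_two, Matrix.tail_cons] at h
    exact h.symm
  have q01 : quadrance B A0 A1 = bdot B (A1 - A0) (A1 - A0) := by
    rw [key A0 A1, sub_self, bdot_zero_right, bdot_zero_right]; ring
  have q02 : quadrance B A0 A2 = bdot B (A2 - A0) (A2 - A0) := by
    rw [key A0 A2, sub_self, bdot_zero_right, bdot_zero_right]; ring
  have q03 : quadrance B A0 A3 = bdot B (A3 - A0) (A3 - A0) := by
    rw [key A0 A3, sub_self, bdot_zero_right, bdot_zero_right]; ring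
  have q12 : quadrance B A1 A2 = bdot B (A1 - A0) (A1 - A0) + bdot B (A2 - A0) (A2 - A0)
      - 2 * bdot B (A1 - A0) (A2 - A0) := by
    rw [key A1 A2, bdot_symm B hB (A2 - A0) (A1 - A0)]; ring
  have q13 : quadrance B A1 A3 = bdot B (A1 - A0) (A1 - A0) + bdot B (A3 - A0) (A3 - A0)
      - 2 * bdot B (A1 - A0) (A3 - A0) := by
    rw [key A1 A3, bdot_symm B hB (A3 - A0) (A1 - A0)]; ring
  have q23 : quadrance B A2 A3 = bdot B (A2 - A0) (A2 - A0) + bdot B (A3 - A0) (A3 - A0)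
      - 2 * bdot B (A2 - A0) (A3 - A0) := by
    rw [key A2 A3, bdot_symm B hB (A3 - A0) (A2 - A0)]; ring
  have qc0 : quadrance B C A0 = bdot B (C - A0) (C - A0) := by
    rw [key C A0, sub_self, bdot_zero_left, bdot_zero_left]; ring
  have qc1 : quadrance B C A1 = bdot B (A1 - A0) (A1 - A0)
      - 2 * bdot B (A1 - A0) (C - A0) + bdot B (C - A0) (C - A0) := key C A1
  have qc2 : quadrance B C A2 = bdot B (A2 - A0) (A2 - A0)
      - 2 * bdot B (A2 - A0) (C - A0) + bdot B (C - A0) (C - A0) := key C A2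
  have qc3 : quadrance B C A3 = bdot B (A3 - A0) (A3 - A0)
      - 2 * bdot B (A3 - A0) (C - A0) + bdot B (C - A0) (C - A0) := key C A3
  have hu1c : 2 * bdot B (A1 - A0) (C - A0) = bdot B (A1 - A0) (A1 - A0) := by
    linear_combination qc1 + hC01 - qc0
  have hu2c : 2 * bdot B (A2 - A0) (C - A0) = bdot B (A2 - A0) (A2 - A0) := by
    linear_combination qc2 + hC02 - qc0
  have hu3c : 2 * bdot B (A3 - A0) (C - A0) = bdot B (A3 - A0) (A3 - A0) := by
    linear_combination qc3 + hC03 - qc0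
  have expand : ∀ x : Fin 3 → F, bdot B x (C - A0) =
      t0 * bdot B x (A1 - A0) + t1 * bdot B x (A2 - A0) + t2 * bdot B x (A3 - A0) := by
    intro x
    rw [hcrepr, bdot_add_right, bdot_add_right, bdot_smul_right, bdot_smul_right,
      bdot_smul_right]
  have hE1 := hu1c; rw [expand (A1 - A0)] at hE1
  have hE2 := hu2c
  rw [expand (A2 - A0), bdot_symm B hB (A2 - A0) (A1 - A0)] at hE2
  have hE3 := hu3c
  rw [expand (A3 - A0), bdot_symm B hB (A3 - A0) (A1 - A0),
    bdot_symm B hB (A3 - A0) (A2 - A0)] at hE3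
  have hcc := expand (C - A0)
  rw [bdot_symm B hB (C - A0) (A1 - A0), bdot_symm B hB (C - A0) (A2 - A0),
    bdot_symm B hB (C - A0) (A3 - A0)] at hcc
  have hR2 : 2 * R = t0 * bdot B (A1 - A0) (A1 - A0) + t1 * bdot B (A2 - A0) (A2 - A0)
      + t2 * bdot B (A3 - A0) (A3 - A0) := by
    rw [hR, qc0]
    linear_combination 2 * hcc + t0 * hu1c + t1 * hu2c + t2 * hu3c
  have h42 : (4 : F) * (1 / 2) = 2 := by
    rw [show (4 : F) = 2 * 2 by norm_num, one_div, mul_assoc, mul_inv_cancel₀ h2, mul_one]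
  rw [quadrume, ← mul_assoc, h42, Matrix.det_fin_three, archi, q01, q02, q03, q12, q13, q23]
  set g11 := bdot B (A1 - A0) (A1 - A0) with hg11
  set g22 := bdot B (A2 - A0) (A2 - A0) with hg22
  set g33 := bdot B (A3 - A0) (A3 - A0) with hg33
  set g12 := bdot B (A1 - A0) (A2 - A0) with hg12
  set g13 := bdot B (A1 - A0) (A3 - A0) with hg13
  set g23 := bdot B (A2 - A0) (A3 - A0) with hg23
  simp only [Matrix.of_apply, Matrix.cons_val', Matrix.cons_val_zero, Matrix.cons_val_one,
    Matrix.head_cons, Matrix.empty_val', Matrix.cons_val_fin_one, Matrix.head_fin_const,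
    Matrix.cons_val_two, Matrix.tail_cons]
  linear_combination
    (8 * (g11 * (g22 * g33 - g23 ^ 2) - g12 * (g12 * g33 - g13 * g23) +
        g13 * (g12 * g23 - g13 * g22))) * hR2 +
    (4 * (g11 * (g22 * g33 - g23 ^ 2) + g22 * (g13 * g23 - g12 * g33) +
        g33 * (g12 * g23 - g13 * g22))) * hE1 +
    (4 * (g11 * (g13 * g23 - g12 * g33) + g22 * (g11 * g33 - g13 ^ 2) +
        g33 * (g12 * g13 - g11 * g23))) * hE2 +
    (4 * (g11 * (g12 * g23 - g13 * g22) + g22 * (g12 * g13 - g11 * g23) +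
        g33 * (g11 * g22 - g12 ^ 2))) * hE3
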